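/- arXiv:math/0001124 — 5 statements merged into one kernel-verified Lean document; each statement's English description precedes it below -/
import Mathlib

section
/- For real numbers a > 0 and u with |u| < a and |t| < a, t ≠ u, the function F(t) = (1/(π√(a² - u²))) · log|(a² - ut + √(a² - t²)·√(a² - u²))/(t - u)| is an antiderivative of t ↦ 1/(π (u - t) √(a² - t²)) on each subinterval of (-a, a) not containing u. -/
open Real

/-- For `a > 0`, `u ∈ (-a, a)`, the explicit function `F` is an antiderivative of
`t ↦ 1/(π (u - t) √(a² - t²))` at every `t ∈ (-a, a)` with `t ≠ u`. -/
theorem antiderivative_formula (a u : ℝ) (ha : 0 < a) (hu : u ∈ Set.Ioo (-a) a) :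
    ∀ t ∈ Set.Ioo (-a) a, t ≠ u →
      HasDerivAt (fun t : ℝ =>
          (1 / (π * Real.sqrt (a ^ 2 - u ^ 2))) *
            Real.log |(a ^ 2 - u * t + Real.sqrt (a ^ 2 - t ^ 2) * Real.sqrt (a ^ 2 - u ^ 2))
              / (t - u)|)
        (1 / (π * (u - t) * Real.sqrt (a ^ 2 - t ^ 2))) t := by
  obtain ⟨hu1, hu2⟩ := hu
  rintro t ⟨ht1, ht2⟩ hne
  set s := Real.sqrt (a ^ 2 - u ^ 2) with hs_def
  set r := Real.sqrt (a ^ 2 - t ^ 2) with hr_def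
  have hupos : 0 < a ^ 2 - u ^ 2 := by nlinarith
  have htpos : 0 < a ^ 2 - t ^ 2 := by nlinarith
  have hs : 0 < s := Real.sqrt_pos.mpr hupos
  have hr : 0 < r := Real.sqrt_pos.mpr htpos
  have hs2 : s ^ 2 = a ^ 2 - u ^ 2 := Real.sq_sqrt hupos.le
  have hr2 : r ^ 2 = a ^ 2 - t ^ 2 := Real.sq_sqrt htpos.le
  have haut : 0 < a ^ 2 - u * t := by nlinarith
  have hN : 0 < a ^ 2 - u * t + r * s := by positivity
  have hD : t - u ≠ 0 := sub_ne_zero.mpr hne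
  have hut : u - t ≠ 0 := sub_ne_zero.mpr (fun h => hne h.symm)
  have hpi : (π : ℝ) ≠ 0 := Real.pi_ne_zero
  -- derivative of r
  have hinner : HasDerivAt (fun x : ℝ => a ^ 2 - x ^ 2) (-(2 * t)) t := by
    simpa using ((hasDerivAt_pow 2 t).const_sub (a ^ 2))
  have hrderiv : HasDerivAt (fun x : ℝ => Real.sqrt (a ^ 2 - x ^ 2)) (-t / r) t := by
    have h := (Real.hasDerivAt_sqrt htpos.ne').comp t hinner
    refine h.congr_deriv ?_
    rw [← hr_def]
    field_simp
  -- derivative of N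
  have hNderiv : HasDerivAt (fun x : ℝ => a ^ 2 - u * x + Real.sqrt (a ^ 2 - x ^ 2) * s)
      (-u + (-t / r) * s) t := by
    have h1 : HasDerivAt (fun x : ℝ => a ^ 2 - u * x) (-u) t := by
      simpa using ((hasDerivAt_id t).const_mul u).const_sub (a ^ 2)
    exact h1.add (hrderiv.mul_const s)
  -- derivative of the quotient g = N / D
  have hg : HasDerivAt (fun x : ℝ => (a ^ 2 - u * x + Real.sqrt (a ^ 2 - x ^ 2) * s) / (x - u))
      (((-u + (-t / r) * s) * (t - u) - (a ^ 2 - u * t + r * s) * 1) / (t - u) ^ 2) t := by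
    exact hNderiv.div ((hasDerivAt_id t).sub_const u) hD
  have hgval : (a ^ 2 - u * t + r * s) / (t - u) ≠ 0 := div_ne_zero hN.ne' hD
  have hlog : HasDerivAt (fun x : ℝ =>
      Real.log |(a ^ 2 - u * x + Real.sqrt (a ^ 2 - x ^ 2) * s) / (x - u)|)
      ((((-u + (-t / r) * s) * (t - u) - (a ^ 2 - u * t + r * s) * 1) / (t - u) ^ 2) /
        ((a ^ 2 - u * t + r * s) / (t - u))) t := by
    have := hg.log hgval
    simpa only [Real.log_abs] using this
  have hfinal := hlog.const_mul (1 / (π * s))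
  refine hfinal.congr_deriv ?_
  symm
  field_simp
  linear_combination (t - u) * r * hs2 - (t - u) * s * hr2
end

section
/- Let a > 1/2 and for u ∈ (1-a, a-1) set g(u) = (1/(π√(a² - u²))) · log( (a² - u² + u + √(a² - (u-1)²)·√(a² - u²)) / (a² - u² - u + √(a² - (u+1)²)·√(a² - u²)) ). Then g(u) < 0 for u ∈ (1-a, 0) and g(u) > 0 for u ∈ (0, a-1). -/
/-! If `N(u)` is the numerator of the logarithm's argument, its denominator is `N(-u)`, so `g` is odd
and it suffices to treat `0 < u < a - 1`. There `N(-u) < N(u)`: the linear parts differ by `2u`, and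
`(u - 1)² ≤ (u + 1)²` makes the square-root product in `N(u)` the larger one. Both are positive
since `a² - u² ± u > 0`, so the logarithm is positive. -/

open Real

noncomputable section

namespace SignOfG

def gNum (a u : ℝ) : ℝ :=
  a ^ 2 - u ^ 2 + u + √(a ^ 2 - (u - 1) ^ 2) * √(a ^ 2 - u ^ 2)

def g (a u : ℝ) : ℝ :=
  1 / (π * √(a ^ 2 - u ^ 2)) * log (gNum a u / gNum a (-u))

variable {a u : ℝ}

lemma gNum_neg (a u : ℝ) :
    gNum a (-u) = a ^ 2 - u ^ 2 - u + √(a ^ 2 - (u + 1) ^ 2) * √(a ^ 2 - u ^ 2) := by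
  simp only [gNum, neg_sq, ← neg_add']
  ring

lemma g_neg (a u : ℝ) : g a (-u) = -g a u := by
  rw [g, g, neg_neg, neg_sq, ← mul_neg, ← log_inv, inv_div]

lemma gNum_pos (hu : |u| < a - 1) : 0 < gNum a u := by
  have hlin : 0 < a ^ 2 - u ^ 2 + u := by
    cases abs_lt.mp hu; nlinarith [sq_abs u, abs_nonneg u]
  unfold gNum
  positivity

lemma gNum_neg_lt (hu : 0 < u) : gNum a (-u) < gNum a u := by
  have hsqrt : √(a ^ 2 - (u + 1) ^ 2) ≤ √(a ^ 2 - (u - 1) ^ 2) :=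
    sqrt_le_sqrt (by nlinarith)
  rw [gNum_neg, gNum]
  nlinarith [mul_le_mul_of_nonneg_right hsqrt (sqrt_nonneg (a ^ 2 - u ^ 2))]

lemma g_pos (hu : 0 < u) (hua : u < a - 1) : 0 < g a u := by
  have habs : |u| < a - 1 := by rwa [abs_of_pos hu]
  have hpre : 0 < 1 / (π * √(a ^ 2 - u ^ 2)) := by
    have : 0 < a ^ 2 - u ^ 2 := by nlinarith
    positivity
  have hden : 0 < gNum a (-u) := gNum_pos (by rwa [abs_neg])
  exact mul_pos hpre (log_pos ((one_lt_div hden).mpr (gNum_neg_lt hu)))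

end SignOfG

end

open SignOfG

theorem sign_of_g_general (a : ℝ) :
    (∀ u ∈ Set.Ioo (1 - a) (0:ℝ),
      (1 / (π * Real.sqrt (a ^ 2 - u ^ 2))) *
        Real.log ((a ^ 2 - u ^ 2 + u +
            Real.sqrt (a ^ 2 - (u - 1) ^ 2) * Real.sqrt (a ^ 2 - u ^ 2)) /
          (a ^ 2 - u ^ 2 - u +
            Real.sqrt (a ^ 2 - (u + 1) ^ 2) * Real.sqrt (a ^ 2 - u ^ 2))) < 0) ∧
    (∀ u ∈ Set.Ioo (0:ℝ) (a - 1),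
      0 < (1 / (π * Real.sqrt (a ^ 2 - u ^ 2))) *
        Real.log ((a ^ 2 - u ^ 2 + u +
            Real.sqrt (a ^ 2 - (u - 1) ^ 2) * Real.sqrt (a ^ 2 - u ^ 2)) /
          (a ^ 2 - u ^ 2 - u +
            Real.sqrt (a ^ 2 - (u + 1) ^ 2) * Real.sqrt (a ^ 2 - u ^ 2)))) := by
  have hg (u : ℝ) : g a u = 1 / (π * √(a ^ 2 - u ^ 2)) * log ((a ^ 2 - u ^ 2 + u +
      √(a ^ 2 - (u - 1) ^ 2) * √(a ^ 2 - u ^ 2)) /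
      (a ^ 2 - u ^ 2 - u + √(a ^ 2 - (u + 1) ^ 2) * √(a ^ 2 - u ^ 2))) := by
    rw [g, gNum_neg, gNum]
  refine ⟨fun u ⟨hu1, hu2⟩ => ?_, fun u ⟨hu1, hu2⟩ => ?_⟩
  · have := g_pos (a := a) (neg_pos.mpr hu2) (by linarith)
    rw [g_neg] at this
    rw [← hg]
    linarith
  · rw [← hg]
    exact g_pos hu1 hu2

/-- Sign of the explicit formula for `f'(u)` on `(1-a, a-1)`. -/
theorem sign_of_g (a : ℝ) (ha : 1 / 2 < a) :
    (∀ u ∈ Set.Ioo (1 - a) (0:ℝ),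
      (1 / (π * Real.sqrt (a ^ 2 - u ^ 2))) *
        Real.log ((a ^ 2 - u ^ 2 + u +
            Real.sqrt (a ^ 2 - (u - 1) ^ 2) * Real.sqrt (a ^ 2 - u ^ 2)) /
          (a ^ 2 - u ^ 2 - u +
            Real.sqrt (a ^ 2 - (u + 1) ^ 2) * Real.sqrt (a ^ 2 - u ^ 2))) < 0) ∧
    (∀ u ∈ Set.Ioo (0:ℝ) (a - 1),
      0 < (1 / (π * Real.sqrt (a ^ 2 - u ^ 2))) *
        Real.log ((a ^ 2 - u ^ 2 + u +
            Real.sqrt (a ^ 2 - (u - 1) ^ 2) * Real.sqrt (a ^ 2 - u ^ 2)) /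
          (a ^ 2 - u ^ 2 - u +
            Real.sqrt (a ^ 2 - (u + 1) ^ 2) * Real.sqrt (a ^ 2 - u ^ 2)))) :=
  sign_of_g_general a
end

section
/- Let a > 1/2 and f(u) = ∫_{[-a,a] \ (u-1, u+1)} log|t - u| / (π √(a² - t²)) dt for u ∈ [-a, a]. Then max_{u ∈ [-a,a]} f(u) = f(a) = f(-a) = ∫_{1-a}^{a} log(t + a)/(π √(a² - t²)) dt. -/
open Real MeasureTheory

set_option maxHeartbeats 1000000

noncomputable def logp (x : ℝ) : ℝ := Real.log (max |x| 1)

lemma logp_nonneg (x : ℝ) : 0 ≤ logp x := Real.log_nonneg (le_max_right _ _)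

lemma logp_of_one_le {x : ℝ} (h : 1 ≤ |x|) : logp x = Real.log |x| := by
  rw [logp, max_eq_left h]

lemma logp_of_le_one {x : ℝ} (h : |x| ≤ 1) : logp x = 0 := by
  rw [logp, max_eq_right h, Real.log_one]

lemma logp_neg (x : ℝ) : logp (-x) = logp x := by rw [logp, logp, abs_neg]

lemma logp_le_log {x C : ℝ} (hC : 1 ≤ C) (h : |x| ≤ C) : logp x ≤ Real.log C :=
  Real.log_le_log (by positivity) (max_le h hC)

lemma logp_lipschitz : LipschitzWith 1 logp := by
  apply LipschitzWith.of_dist_le_mul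
  intro x y
  rw [NNReal.coe_one, one_mul, Real.dist_eq, Real.dist_eq]
  have key : ∀ p q : ℝ, logp p - logp q ≤ |p - q| := by
    intro p q
    have h1 : (1:ℝ) ≤ max |q| 1 := le_max_right _ _
    have h2 : (0:ℝ) < max |q| 1 := lt_of_lt_of_le one_pos h1
    have h3 : (0:ℝ) < max |p| 1 := lt_of_lt_of_le one_pos (le_max_right _ _)
    have : logp p - logp q = Real.log (max |p| 1 / max |q| 1) := by
      rw [logp, logp, Real.log_div (ne_of_gt h3) (ne_of_gt h2)]
    rw [this]
    have h4 : Real.log (max |p| 1 / max |q| 1) ≤ max |p| 1 / max |q| 1 - 1 :=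
      Real.log_le_sub_one_of_pos (by positivity)
    have h6 : max |p| 1 - max |q| 1 ≤ |p - q| :=
      le_trans (le_trans (le_abs_self _) (abs_max_sub_max_le_abs _ _ _))
        (abs_abs_sub_abs_le_abs_sub p q)
    rcases le_or_gt (max |p| 1) (max |q| 1) with hle | hgt
    · have : Real.log (max |p| 1 / max |q| 1) ≤ 0 :=
        Real.log_nonpos (by positivity) ((div_le_one h2).2 hle)
      exact le_trans this (abs_nonneg _)
    · have h5 : max |p| 1 / max |q| 1 - 1 ≤ max |p| 1 - max |q| 1 := by
        rw [div_sub_one (ne_of_gt h2), div_le_iff₀ h2]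
        nlinarith [sub_nonneg.2 h1, le_of_lt hgt]
      linarith
  exact abs_sub_le_iff.mpr ⟨key x y, (key y x).trans (le_of_eq (abs_sub_comm y x))⟩

lemma logp_continuous : Continuous logp :=
  (continuous_abs.max continuous_const).log
    (fun x => by positivity)


lemma w_int (ha0 : 0 < a) :
    IntegrableOn (fun t : ℝ => 1 / (π * Real.sqrt (a ^ 2 - t ^ 2))) (Set.Icc (-a) a) := by
  rw [integrableOn_Icc_iff_integrableOn_Ioc]
  apply intervalIntegral.integrableOn_deriv_of_nonneg (g := fun x => π⁻¹ * Real.arcsin (x / a))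
  · exact (continuous_const.mul (Real.continuous_arcsin.comp
      (continuous_id.div_const a))).continuousOn
  · intro x hx
    obtain ⟨hx1, hx2⟩ := hx
    have hne1 : x / a ≠ -1 := by
      intro h
      have : x = -a := by field_simp at h; linarith
      linarith
    have hne2 : x / a ≠ 1 := by
      intro h
      have : x = a := by
        field_simp at h
        exact h
      linarith
    have harc := (Real.hasDerivAt_arcsin hne1 hne2).comp x ((hasDerivAt_id x).div_const a)
    have := harc.const_mul π⁻¹
    refine this.congr_deriv (Eq.symm ?_)
    have hpos : 0 < a ^ 2 - x ^ 2 := by nlinarith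
    have h1 : 1 - (x / a) ^ 2 = (a ^ 2 - x ^ 2) / a ^ 2 := by field_simp
    rw [h1, Real.sqrt_div (le_of_lt hpos), Real.sqrt_sq (le_of_lt ha0)]
    have hs : 0 < Real.sqrt (a ^ 2 - x ^ 2) := Real.sqrt_pos.2 hpos
    field_simp
  · intro x _; positivity

lemma logp_int (ha0 : 0 < a) {u : ℝ} (hu : u ∈ Set.Icc (-a) a) :
    IntegrableOn (fun t : ℝ => logp (t - u) / (π * Real.sqrt (a ^ 2 - t ^ 2)))
      (Set.Icc (-a) a) := by
  have hC : (1:ℝ) ≤ 2 * a + 1 := by linarith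
  apply Integrable.mono' (((w_int ha0).const_mul (Real.log (2 * a + 1))))
  · exact ((logp_continuous.comp (continuous_id.sub continuous_const)).measurable.div
      ((continuous_const.mul ((continuous_const.sub (continuous_pow 2)).sqrt)).measurable)).aestronglyMeasurable
  · rw [ae_restrict_iff' measurableSet_Icc]
    apply ae_of_all
    intro t ht
    have h1 : |t - u| ≤ 2 * a + 1 := by
      rw [abs_le]; constructor <;> [linarith [ht.1, hu.2]; linarith [ht.2, hu.1]]
    have h2 : logp (t - u) ≤ Real.log (2 * a + 1) := logp_le_log hC h1
    have h3 : 0 ≤ π * Real.sqrt (a ^ 2 - t ^ 2) := by positivity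
    rw [Real.norm_eq_abs, abs_div, abs_of_nonneg (logp_nonneg _), abs_of_nonneg h3]
    rcases eq_or_lt_of_le h3 with h4 | h4
    · rw [← h4]; simp
    · rw [mul_one_div]
      exact (div_le_div_iff_of_pos_right h4).2 h2


noncomputable def Fl (a u : ℝ) : ℝ := ∫ ψ in Set.Ioo (0:ℝ) π, logp (a * Real.cos ψ - u)

lemma image_cos {a : ℝ} (ha0 : 0 < a) :
    (fun ψ => a * Real.cos ψ) '' Set.Ioo 0 π = Set.Ioo (-a) a := by
  ext t
  constructor
  · rintro ⟨ψ, hψ, rfl⟩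
    have h1 : Real.cos ψ < Real.cos 0 :=
      Real.strictAntiOn_cos ⟨le_refl 0, Real.pi_pos.le⟩
        ⟨hψ.1.le, hψ.2.le⟩ hψ.1
    have h2 : Real.cos π < Real.cos ψ :=
      Real.strictAntiOn_cos ⟨hψ.1.le, hψ.2.le⟩ ⟨Real.pi_pos.le, le_refl π⟩ hψ.2
    rw [Real.cos_zero] at h1
    rw [Real.cos_pi] at h2
    simp only [Set.mem_Ioo]
    constructor <;> nlinarith
  · intro ht
    have h1 : -1 < t / a := by rw [lt_div_iff₀ ha0]; linarith [ht.1]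
    have h2 : t / a < 1 := by rw [div_lt_iff₀ ha0]; linarith [ht.2]
    refine ⟨Real.arccos (t / a), ⟨Real.arccos_pos.2 h2, ?_⟩, ?_⟩
    · rw [← Real.arccos_neg_one]
      have := Real.arccos_le_pi (t/a)
      rcases eq_or_lt_of_le this with h | h
      · exfalso
        have := Real.cos_arccos h1.le h2.le
        rw [h, Real.cos_pi] at this
        linarith
      · rw [Real.arccos_neg_one]; exact h
    · show a * Real.cos (Real.arccos (t/a)) = t
      rw [Real.cos_arccos h1.le h2.le]; field_simp

lemma f_eq {a : ℝ} (ha0 : 0 < a) {u : ℝ} (hu : u ∈ Set.Icc (-a) a) :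
    (∫ t in Set.Icc (-a) a \ Set.Ioo (u - 1) (u + 1),
        Real.log |t - u| / (π * Real.sqrt (a ^ 2 - t ^ 2))) = π⁻¹ * Fl a u := by
  have hmd : MeasurableSet (Set.Icc (-a) a \ Set.Ioo (u-1) (u+1)) :=
    measurableSet_Icc.diff measurableSet_Ioo
  have step1 : (∫ t in Set.Icc (-a) a \ Set.Ioo (u - 1) (u + 1),
      Real.log |t - u| / (π * Real.sqrt (a ^ 2 - t ^ 2)))
      = ∫ t in Set.Icc (-a) a \ Set.Ioo (u - 1) (u + 1),
        logp (t - u) / (π * Real.sqrt (a ^ 2 - t ^ 2)) := by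
    apply setIntegral_congr_fun hmd
    intro t ht
    have h1 : 1 ≤ |t - u| := by
      have := ht.2
      simp only [Set.mem_Ioo, not_and_or, not_lt] at this
      rcases this with h | h
      · rw [le_abs]; right; linarith
      · rw [le_abs]; left; linarith
    simp only [logp_of_one_le h1, Real.log_abs]
  rw [step1]
  have h0 : (∫ t in Set.Icc (-a) a ∩ Set.Ioo (u - 1) (u + 1),
      logp (t - u) / (π * Real.sqrt (a ^ 2 - t ^ 2))) = 0 := by
    rw [setIntegral_congr_fun (measurableSet_Icc.inter measurableSet_Ioo)
      (g := fun _ => (0:ℝ))]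
    · exact integral_zero _ _
    · intro t ht
      have h1 : |t - u| ≤ 1 := by
        have := ht.2
        rw [abs_le]
        constructor <;> [linarith [this.1]; linarith [this.2]]
      simp [logp_of_le_one h1]
  have step2 : (∫ t in Set.Icc (-a) a \ Set.Ioo (u - 1) (u + 1),
      logp (t - u) / (π * Real.sqrt (a ^ 2 - t ^ 2)))
      = ∫ t in Set.Icc (-a) a, logp (t - u) / (π * Real.sqrt (a ^ 2 - t ^ 2)) := by
    conv_rhs => rw [← Set.diff_union_inter (Set.Icc (-a) a) (Set.Ioo (u-1) (u+1))]
    rw [setIntegral_union Set.disjoint_sdiff_inter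
      (measurableSet_Icc.inter measurableSet_Ioo)
      ((logp_int ha0 hu).mono_set Set.diff_subset)
      ((logp_int ha0 hu).mono_set Set.inter_subset_left), h0, add_zero]
  rw [step2, integral_Icc_eq_integral_Ioc, integral_Ioc_eq_integral_Ioo, ← image_cos ha0]
  have hder : ∀ ψ ∈ Set.Ioo (0:ℝ) π, HasDerivWithinAt (fun ψ => a * Real.cos ψ)
      (a * (-Real.sin ψ)) (Set.Ioo (0:ℝ) π) ψ :=
    fun ψ _ => ((Real.hasDerivAt_cos ψ).const_mul a).hasDerivWithinAt
  have hinj : Set.InjOn (fun ψ => a * Real.cos ψ) (Set.Ioo 0 π) := by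
    intro ψ₁ h₁ ψ₂ h₂ h
    exact Real.injOn_cos ⟨h₁.1.le, h₁.2.le⟩ ⟨h₂.1.le, h₂.2.le⟩
      (mul_left_cancel₀ (ne_of_gt ha0) h)
  rw [integral_image_eq_integral_abs_deriv_smul measurableSet_Ioo hder hinj]
  have step3 : (∫ ψ in Set.Ioo (0:ℝ) π, |a * (-Real.sin ψ)| •
      (logp (a * Real.cos ψ - u) / (π * Real.sqrt (a ^ 2 - (a * Real.cos ψ) ^ 2))))
      = ∫ ψ in Set.Ioo (0:ℝ) π, π⁻¹ * logp (a * Real.cos ψ - u) := by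
    apply setIntegral_congr_fun measurableSet_Ioo
    intro ψ hψ
    have hs : 0 < Real.sin ψ := Real.sin_pos_of_pos_of_lt_pi hψ.1 hψ.2
    show |a * -Real.sin ψ| • (logp (a * Real.cos ψ - u) / (π * Real.sqrt (a ^ 2 - (a * Real.cos ψ) ^ 2))) = _
    have habs : |a * -Real.sin ψ| = a * Real.sin ψ := by
      rw [abs_mul, abs_neg, abs_of_pos hs, abs_of_pos ha0]
    have hsq : a ^ 2 - (a * Real.cos ψ) ^ 2 = (a * Real.sin ψ) ^ 2 := by
      have := Real.sin_sq_add_cos_sq ψ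
      nlinarith
    rw [habs, hsq, Real.sqrt_sq (by positivity), smul_eq_mul]
    field_simp
  rw [step3, integral_const_mul]
  rfl

lemma Fl_interval (a u : ℝ) : Fl a u = ∫ ψ in (0:ℝ)..π, logp (a * Real.cos ψ - u) := by
  rw [intervalIntegral.integral_of_le Real.pi_pos.le, integral_Ioc_eq_integral_Ioo]; rfl

lemma Fl_int (a u : ℝ) : IntegrableOn (fun ψ => logp (a * Real.cos ψ - u)) (Set.Ioo (0:ℝ) π) :=
  ((logp_continuous.comp ((continuous_const.mul Real.continuous_cos).sub
    continuous_const)).integrableOn_Icc (a := 0) (b := π)).mono_set Set.Ioo_subset_Icc_self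

lemma Fl_neg (a v : ℝ) : Fl a (-v) = Fl a v := by
  rw [Fl_interval, Fl_interval]
  have h2 := intervalIntegral.integral_comp_sub_left (a := 0) (b := π)
    (fun ψ => logp (a * Real.cos ψ - v)) π
  rw [show π - π = 0 by ring, sub_zero] at h2
  rw [← h2]
  apply intervalIntegral.integral_congr
  intro x _
  simp only [Real.cos_pi_sub]
  rw [show a * Real.cos x - -v = -(a * -Real.cos x - v) by ring, logp_neg]

lemma Fl_lip (a : ℝ) : ∀ u v, |Fl a u - Fl a v| ≤ π * |u - v| := by
  intro u v
  rw [Fl, Fl, ← integral_sub (Fl_int a u) (Fl_int a v)]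
  have key : ∀ ψ ∈ Set.Ioo (0:ℝ) π,
      ‖logp (a * Real.cos ψ - u) - logp (a * Real.cos ψ - v)‖ ≤ |u - v| := by
    intro ψ _
    have := logp_lipschitz.dist_le_mul (a * Real.cos ψ - u) (a * Real.cos ψ - v)
    rw [NNReal.coe_one, one_mul, Real.dist_eq, Real.dist_eq] at this
    calc ‖logp (a * Real.cos ψ - u) - logp (a * Real.cos ψ - v)‖
        ≤ |a * Real.cos ψ - u - (a * Real.cos ψ - v)| := this
      _ = |u - v| := by rw [show a * Real.cos ψ - u - (a * Real.cos ψ - v) = -(u-v) by ring, abs_neg]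
  have hfin : volume (Set.Ioo (0:ℝ) π) < ⊤ := by
    rw [Real.volume_Ioo]; exact ENNReal.ofReal_lt_top
  have := norm_setIntegral_le_of_norm_le_const hfin key
  rw [Real.volume_real_Ioo_of_le Real.pi_pos.le, sub_zero] at this
  · calc |_| ≤ |u - v| * π := this
      _ = π * |u - v| := by ring

lemma abs_sin_le_abs (t : ℝ) : |Real.sin t| ≤ |t| := by
  have key : ∀ s : ℝ, 0 ≤ s → |Real.sin s| ≤ s := by
    intro s hs
    rcases le_or_gt s 1 with h | h
    · rw [abs_of_nonneg (Real.sin_nonneg_of_nonneg_of_le_pi hs (by linarith [Real.pi_gt_three]))]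
      exact Real.sin_le hs
    · exact le_trans (Real.abs_sin_le_one s) h.le
  rcases le_or_gt 0 t with h | h
  · rw [abs_of_nonneg h]; exact key t h
  · have h2 := key (-t) (by linarith)
    rw [Real.sin_neg, abs_neg] at h2
    rw [abs_of_neg h]; exact h2

lemma abs_cos_sub_cos_le (x y : ℝ) : |Real.cos x - Real.cos y| ≤ |x - y| := by
  rw [Real.cos_sub_cos]
  rw [abs_mul, abs_mul]
  calc |(-2 : ℝ)| * |Real.sin ((x + y)/2)| * |Real.sin ((x - y)/2)|
      ≤ |(-2 : ℝ)| * 1 * |(x - y)/2| := by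
        apply mul_le_mul
        · apply mul_le_mul le_rfl (Real.abs_sin_le_one _) (abs_nonneg _) (abs_nonneg _)
        · exact abs_sin_le_abs _
        · exact abs_nonneg _
        · positivity
    _ = |x - y| := by rw [abs_neg, abs_two, abs_div, abs_two]; ring

/-- The pointwise derivative integrand. -/
noncomputable def Dfun (a φ : ℝ) : ℝ → ℝ := fun ψ =>
  if 1 < |a * Real.cos ψ - a * Real.cos φ| then Real.sin φ / (Real.cos ψ - Real.cos φ) else 0

lemma Dfun_meas (a φ : ℝ) : Measurable (Dfun a φ) := by
  apply Measurable.ite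
  · exact measurableSet_lt measurable_const
      ((continuous_abs.comp ((continuous_const.mul Real.continuous_cos).sub
        continuous_const)).measurable)
  · exact measurable_const.div (Real.measurable_cos.sub measurable_const)
  · exact measurable_const

lemma Dfun_bound {a : ℝ} (ha0 : 0 < a) (φ ψ : ℝ) : ‖Dfun a φ ψ‖ ≤ a := by
  rw [Dfun, Real.norm_eq_abs]
  split_ifs with h
  · have h2 : 1 < a * |Real.cos ψ - Real.cos φ| := by
      rw [← abs_of_pos ha0, ← abs_mul, mul_sub]; exact h
    have h3 : 0 < |Real.cos ψ - Real.cos φ| := by nlinarith [abs_nonneg (Real.cos ψ - Real.cos φ)]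
    rw [abs_div, div_le_iff₀ h3]
    nlinarith [Real.abs_sin_le_one φ, h2]
  · simpa using ha0.le

lemma G_hasDeriv {a : ℝ} (ha0 : 0 < a) (φ : ℝ) :
    HasDerivAt (fun x => Fl a (a * Real.cos x))
      (∫ ψ in Set.Ioo (0:ℝ) π, Dfun a φ ψ) φ := by
  have hfin : volume (Set.Ioo (0:ℝ) π) < ⊤ := by
    rw [Real.volume_Ioo]; exact ENNReal.ofReal_lt_top
  have key := hasDerivAt_integral_of_dominated_loc_of_lip
    (F := fun x ψ => logp (a * Real.cos ψ - a * Real.cos x))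
    (F' := Dfun a φ) (x₀ := φ) (μ := volume.restrict (Set.Ioo (0:ℝ) π))
    (bound := fun _ => a) (s := Metric.ball φ 1) (Metric.ball_mem_nhds φ one_pos)
    ?_ ?_ ?_ ?_ ?_ ?_
  · exact key.2
  · apply Filter.Eventually.of_forall
    intro x
    exact (logp_continuous.comp ((continuous_const.mul Real.continuous_cos).sub
      continuous_const)).aestronglyMeasurable
  · exact Fl_int a (a * Real.cos φ)
  · exact (Dfun_meas a φ).aestronglyMeasurable
  · apply Filter.Eventually.of_forall
    intro ψ
    have inner : LipschitzWith (Real.nnabs a)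
        (fun x : ℝ => a * Real.cos ψ - a * Real.cos x) := by
      apply LipschitzWith.of_dist_le_mul
      intro x y
      rw [Real.dist_eq, Real.dist_eq, Real.coe_nnabs]
      have h1 : a * Real.cos ψ - a * Real.cos x - (a * Real.cos ψ - a * Real.cos y)
          = a * (Real.cos y - Real.cos x) := by ring
      rw [h1, abs_mul]
      apply mul_le_mul le_rfl ?_ (abs_nonneg _) (abs_nonneg _)
      calc |Real.cos y - Real.cos x| ≤ |y - x| := _root_.abs_cos_sub_cos_le y x
        _ = |x - y| := abs_sub_comm y x
    have := logp_lipschitz.comp inner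
    rw [one_mul] at this
    exact this.lipschitzOnWith
  · rw [integrable_const_iff]
    right; exact ⟨by rwa [Measure.restrict_apply_univ]⟩
  · -- the a.e. differentiability
    rw [ae_restrict_iff' measurableSet_Ioo]
    have hbad : ∀ᵐ ψ : ℝ, ψ ∉ ({Real.arccos (Real.cos φ + 1/a),
        Real.arccos (Real.cos φ - 1/a)} : Set ℝ) := by
      have : volume ({Real.arccos (Real.cos φ + 1/a),
          Real.arccos (Real.cos φ - 1/a)} : Set ℝ) = 0 :=
        Set.Finite.measure_zero ((Set.finite_singleton _).insert _) _
      exact measure_eq_zero_iff_ae_notMem.1 this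
    apply hbad.mono
    intro ψ hψbad hψ
    have hne1 : |a * Real.cos ψ - a * Real.cos φ| ≠ 1 := by
      intro h
      have h2 : a * Real.cos ψ - a * Real.cos φ = 1 ∨ a * Real.cos ψ - a * Real.cos φ = -1 := by
        rcases abs_eq (by norm_num : (0:ℝ) ≤ 1) |>.1 h with h' | h'
        · left; exact h'
        · right; exact h'
      apply hψbad
      rw [Set.mem_insert_iff, Set.mem_singleton_iff]
      rcases h2 with h' | h'
      · left
        have hcos : Real.cos ψ = Real.cos φ + 1/a := by field_simp at h' ⊢; linarith
        rw [← hcos, Real.arccos_cos hψ.1.le hψ.2.le]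
      · right
        have hcos : Real.cos ψ = Real.cos φ - 1/a := by field_simp at h' ⊢; linarith
        rw [← hcos, Real.arccos_cos hψ.1.le hψ.2.le]
    rcases lt_or_gt_of_ne hne1 with hlt | hgt
    · -- |g| < 1 : logp is locally zero
      have hev : ∀ᶠ x in nhds φ, |a * Real.cos ψ - a * Real.cos x| < 1 := by
        have hcont : ContinuousAt (fun x => |a * Real.cos ψ - a * Real.cos x|) φ := by
          apply Continuous.continuousAt
          exact continuous_abs.comp ((continuous_const.sub
            (continuous_const.mul Real.continuous_cos)))
        exact hcont.eventually (eventually_lt_nhds hlt)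
      have heq : (fun x => logp (a * Real.cos ψ - a * Real.cos x)) =ᶠ[nhds φ]
          (fun _ => (0:ℝ)) := hev.mono (fun x hx => logp_of_le_one hx.le)
      have h0 : Dfun a φ ψ = 0 := by
        simp only [Dfun]; rw [if_neg (by rw [not_lt]; exact hlt.le)]
      rw [h0]
      exact (hasDerivAt_const φ (0:ℝ)).congr_of_eventuallyEq heq
    · -- 1 < |g| : logp = log locally
      have hgne : a * Real.cos ψ - a * Real.cos φ ≠ 0 := by
        intro h; rw [h] at hgt; norm_num at hgt
      have hd : HasDerivAt (fun x => a * Real.cos ψ - a * Real.cos x)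
          (a * Real.sin φ) φ := by
        have := ((Real.hasDerivAt_cos φ).const_mul a).const_sub (a * Real.cos ψ)
        refine this.congr_deriv (Eq.symm ?_)
        ring
      have hlog := hd.log hgne
      have hev : ∀ᶠ x in nhds φ, 1 < |a * Real.cos ψ - a * Real.cos x| := by
        have hcont : ContinuousAt (fun x => |a * Real.cos ψ - a * Real.cos x|) φ := by
          apply Continuous.continuousAt
          exact continuous_abs.comp ((continuous_const.sub
            (continuous_const.mul Real.continuous_cos)))
        exact hcont.eventually (eventually_gt_nhds hgt)
      have heq : (fun x => logp (a * Real.cos ψ - a * Real.cos x)) =ᶠ[nhds φ]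
          (fun x => Real.log (a * Real.cos ψ - a * Real.cos x)) :=
        hev.mono (fun x hx => by
          show logp _ = Real.log _
          rw [logp_of_one_le hx.le, Real.log_abs])
      have hD : Dfun a φ ψ = a * Real.sin φ / (a * Real.cos ψ - a * Real.cos φ) := by
        simp only [Dfun]
        rw [if_pos hgt]
        rw [show a * Real.cos ψ - a * Real.cos φ = a * (Real.cos ψ - Real.cos φ) by ring,
          mul_div_mul_left _ _ (ne_of_gt ha0)]
      rw [hD]
      exact hlog.congr_of_eventuallyEq heq

noncomputable def Afun (φ : ℝ) : ℝ → ℝ := fun ψ =>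
  Real.log (Real.sin ((ψ + φ)/2)) - Real.log (Real.sin ((ψ - φ)/2))

noncomputable def alph (a φ : ℝ) : ℝ := Real.arccos (Real.cos φ + 1/a)
noncomputable def beth (a φ : ℝ) : ℝ := Real.arccos (Real.cos φ - 1/a)

lemma lt_of_cos_lt {x y : ℝ} (hx : x ∈ Set.Icc 0 π) (hy : y ∈ Set.Icc 0 π)
    (h : Real.cos x < Real.cos y) : y < x := by
  by_contra hc
  push_neg at hc
  rcases eq_or_lt_of_le hc with rfl | hlt
  · exact lt_irrefl _ h
  · have := Real.strictAntiOn_cos hx hy hlt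
    linarith

lemma A_hasDeriv {φ : ℝ} (ψ : ℝ) (hP1 : 0 < (ψ + φ)/2) (hP2 : (ψ + φ)/2 < π)
    (hN : Real.sin ((ψ - φ)/2) ≠ 0) :
    HasDerivAt (Afun φ) (Real.sin φ / (Real.cos ψ - Real.cos φ)) ψ := by
  have hsP : 0 < Real.sin ((ψ + φ)/2) := Real.sin_pos_of_pos_of_lt_pi hP1 hP2
  have h1 : HasDerivAt (fun ψ : ℝ => (ψ + φ)/2) (1/2) ψ := by
    have := ((hasDerivAt_id ψ).add_const φ).div_const (2:ℝ)
    simpa using this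
  have h2 : HasDerivAt (fun ψ : ℝ => (ψ - φ)/2) (1/2) ψ := by
    have := ((hasDerivAt_id ψ).sub_const φ).div_const (2:ℝ)
    simpa using this
  have hs1 : HasDerivAt (fun ψ : ℝ => Real.sin ((ψ + φ)/2))
      (Real.cos ((ψ + φ)/2) * (1/2)) ψ := (Real.hasDerivAt_sin _).comp ψ h1
  have hs2 : HasDerivAt (fun ψ : ℝ => Real.sin ((ψ - φ)/2))
      (Real.cos ((ψ - φ)/2) * (1/2)) ψ := (Real.hasDerivAt_sin _).comp ψ h2
  have hl1 := hs1.log (ne_of_gt hsP)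
  have hl2 := hs2.log hN
  have hd := hl1.sub hl2
  refine hd.congr_deriv (Eq.symm ?_)
  have hcc : Real.cos ψ - Real.cos φ
      = -2 * Real.sin ((ψ + φ)/2) * Real.sin ((ψ - φ)/2) := Real.cos_sub_cos ψ φ
  have hsφ : Real.sin φ = Real.sin ((ψ + φ)/2) * Real.cos ((ψ - φ)/2)
      - Real.cos ((ψ + φ)/2) * Real.sin ((ψ - φ)/2) := by
    rw [← Real.sin_sub]; congr 1; ring
  rw [hcc, hsφ]
  field_simp
  ring

lemma intD_eq {a φ : ℝ} (ha0 : 0 < a) (hφ : φ ∈ Set.Ioo 0 (π/2)) :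
    ∫ ψ in Set.Ioo (0:ℝ) π, Dfun a φ ψ = Afun φ (alph a φ) - Afun φ (beth a φ) := by
  obtain ⟨hφ0, hφ2⟩ := hφ
  have hπ : 0 < π := Real.pi_pos
  have hφπ : φ < π := by linarith
  have ha' : 0 < 1/a := by positivity
  have ha1 : a * (1/a) = 1 := by field_simp
  set α := alph a φ with hαdef
  set β := beth a φ with hβdef
  have hα0 : 0 ≤ α := Real.arccos_nonneg _
  have hαπ : α ≤ π := Real.arccos_le_pi _
  have hβ0 : 0 ≤ β := Real.arccos_nonneg _
  have hβπ : β ≤ π := Real.arccos_le_pi _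
  have hcosφα : Real.cos φ < Real.cos α := by
    rcases le_or_gt (Real.cos φ + 1/a) 1 with hc | hc
    · rw [hαdef, alph, Real.cos_arccos (by nlinarith [Real.neg_one_le_cos φ]) hc]
      linarith
    · rw [hαdef, alph, Real.arccos_eq_zero.2 hc.le, Real.cos_zero]
      have := Real.strictAntiOn_cos (Set.left_mem_Icc.2 hπ.le) ⟨hφ0.le, hφπ.le⟩ hφ0
      rwa [Real.cos_zero] at this
  have hαφ : α < φ := lt_of_cos_lt ⟨hφ0.le, hφπ.le⟩ ⟨hα0, hαπ⟩ hcosφα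
  have hcosβφ : Real.cos β < Real.cos φ := by
    rcases le_or_gt (-1) (Real.cos φ - 1/a) with hc | hc
    · rw [hβdef, beth, Real.cos_arccos hc (by nlinarith [Real.cos_le_one φ])]
      linarith
    · rw [hβdef, beth, Real.arccos_eq_pi.2 hc.le, Real.cos_pi]
      have : 0 < Real.cos φ := Real.cos_pos_of_mem_Ioo ⟨by linarith, hφ2⟩
      linarith
  have hφβ : φ < β := lt_of_cos_lt ⟨hβ0, hβπ⟩ ⟨hφ0.le, hφπ.le⟩ hcosβφ
  have hcosβ : Real.cos φ - 1/a ≤ Real.cos β := by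
    rcases le_or_gt (-1) (Real.cos φ - 1/a) with hc | hc
    · rw [hβdef, beth, Real.cos_arccos hc (by nlinarith [Real.cos_le_one φ])]
    · exact le_trans hc.le (Real.neg_one_le_cos β)
  have hDii : ∀ x y : ℝ, IntervalIntegrable (Dfun a φ) volume x y := by
    intro x y
    rw [intervalIntegrable_iff]
    apply Integrable.mono' (g := fun _ => a)
    · exact integrableOn_const measure_Ioc_lt_top.ne
    · exact (Dfun_meas a φ).aestronglyMeasurable
    · exact ae_of_all _ (fun ψ => Dfun_bound ha0 φ ψ)
  rw [← integral_Ioc_eq_integral_Ioo, ← intervalIntegral.integral_of_le hπ.le]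
  rw [← intervalIntegral.integral_add_adjacent_intervals (b := α) (hDii 0 α) (hDii α π),
      ← intervalIntegral.integral_add_adjacent_intervals (a := α) (b := β) (hDii α β) (hDii β π)]
  have hP2 : ∫ ψ in α..β, Dfun a φ ψ = 0 := by
    have heq : ∫ ψ in α..β, Dfun a φ ψ = ∫ _ in α..β, (0:ℝ) := by
      apply intervalIntegral.integral_congr_ae
      apply ae_of_all
      intro ψ hψ
      rw [Set.uIoc_of_le (by linarith : α ≤ β)] at hψ
      obtain ⟨hψ1, hψ2⟩ := hψ
      have hψ0 : 0 ≤ ψ := le_trans hα0 hψ1.le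
      have hψπ : ψ ≤ π := le_trans hψ2 hβπ
      have hup : Real.cos ψ - Real.cos φ ≤ 1/a := by
        rcases le_or_gt (Real.cos φ + 1/a) 1 with hc | hc
        · have hcosα : Real.cos α = Real.cos φ + 1/a :=
            Real.cos_arccos (by nlinarith [Real.neg_one_le_cos φ]) hc
          have : Real.cos ψ < Real.cos α :=
            Real.strictAntiOn_cos ⟨hα0, hαπ⟩ ⟨hψ0, hψπ⟩ hψ1
          linarith
        · linarith [Real.cos_le_one ψ]
      have hdn : Real.cos φ - Real.cos ψ ≤ 1/a := by
        have : Real.cos β ≤ Real.cos ψ :=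
          Real.cos_le_cos_of_nonneg_of_le_pi hψ0 hβπ hψ2
        linarith
      have habs : ¬ (1 < |a * Real.cos ψ - a * Real.cos φ|) := by
        rw [not_lt, abs_le]
        constructor
        · nlinarith [mul_le_mul_of_nonneg_left hdn ha0.le, ha1]
        · nlinarith [mul_le_mul_of_nonneg_left hup ha0.le, ha1]
      simp only [Dfun]
      rw [if_neg habs]
    rw [heq, intervalIntegral.integral_zero]
  have hAcont : ∀ x y : ℝ, x ≤ y →
      (∀ ψ ∈ Set.Icc x y, Real.cos ψ - Real.cos φ ≠ 0) →
      IntervalIntegrable (fun ψ => Real.sin φ / (Real.cos ψ - Real.cos φ)) volume x y := by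
    intro x y hxy hne
    apply ContinuousOn.intervalIntegrable
    rw [Set.uIcc_of_le hxy]
    exact continuousOn_const.div
      ((Real.continuous_cos.continuousOn).sub continuousOn_const) hne
  have hP1 : ∫ ψ in (0:ℝ)..α, Dfun a φ ψ = Afun φ α - Afun φ 0 := by
    have hcongr : ∫ ψ in (0:ℝ)..α, Dfun a φ ψ
        = ∫ ψ in (0:ℝ)..α, Real.sin φ / (Real.cos ψ - Real.cos φ) := by
      apply intervalIntegral.integral_congr_ae
      have hae : ∀ᵐ ψ : ℝ, ψ ∉ ({α} : Set ℝ) :=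
        measure_eq_zero_iff_ae_notMem.1 (measure_singleton α)
      apply hae.mono
      intro ψ hψne hψmem
      rw [Set.uIoc_of_le hα0] at hψmem
      have hψα : ψ < α := lt_of_le_of_ne hψmem.2 (by simpa using hψne)
      rcases le_or_gt (Real.cos φ + 1/a) 1 with hc | hc
      · have hcosα : Real.cos α = Real.cos φ + 1/a :=
          Real.cos_arccos (by nlinarith [Real.neg_one_le_cos φ]) hc
        have hlt : Real.cos α < Real.cos ψ :=
          Real.strictAntiOn_cos ⟨hψmem.1.le, le_trans hψα.le hαπ⟩ ⟨hα0, hαπ⟩ hψα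
        have hgt : 1 < |a * Real.cos ψ - a * Real.cos φ| := by
          rw [lt_abs]; left
          nlinarith [mul_lt_mul_of_pos_left (show 1/a < Real.cos ψ - Real.cos φ by linarith) ha0, ha1]
        simp only [Dfun]
        rw [if_pos hgt]
      · exfalso
        have hz : α = 0 := by rw [hαdef, alph]; exact Real.arccos_eq_zero.2 hc.le
        rw [hz] at hψα
        linarith [hψmem.1]
    rw [hcongr]
    have hderiv : ∀ ψ ∈ Set.uIcc (0:ℝ) α, HasDerivAt (Afun φ)
        (Real.sin φ / (Real.cos ψ - Real.cos φ)) ψ := by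
      intro ψ hψ
      rw [Set.uIcc_of_le hα0] at hψ
      obtain ⟨h1, h2⟩ := hψ
      apply A_hasDeriv
      · linarith
      · linarith
      · apply ne_of_lt
        apply Real.sin_neg_of_neg_of_neg_pi_lt
        · linarith
        · linarith
    exact intervalIntegral.integral_eq_sub_of_hasDerivAt hderiv
      (hAcont 0 α hα0 (fun ψ hψ => by
        have : Real.cos α ≤ Real.cos ψ :=
          Real.cos_le_cos_of_nonneg_of_le_pi hψ.1 hαπ hψ.2
        exact ne_of_gt (by linarith)))
  have hP3 : ∫ ψ in β..π, Dfun a φ ψ = Afun φ π - Afun φ β := by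
    have hcongr : ∫ ψ in β..π, Dfun a φ ψ
        = ∫ ψ in β..π, Real.sin φ / (Real.cos ψ - Real.cos φ) := by
      apply intervalIntegral.integral_congr_ae
      apply ae_of_all
      intro ψ hψmem
      rw [Set.uIoc_of_le hβπ] at hψmem
      obtain ⟨h1, h2⟩ := hψmem
      rcases le_or_gt (-1) (Real.cos φ - 1/a) with hc | hc
      · have hcosβv : Real.cos β = Real.cos φ - 1/a :=
          Real.cos_arccos hc (by nlinarith [Real.cos_le_one φ])
        have hlt : Real.cos ψ < Real.cos β :=
          Real.strictAntiOn_cos ⟨hβ0, hβπ⟩ ⟨le_trans hβ0 h1.le, h2⟩ h1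
        have hgt : 1 < |a * Real.cos ψ - a * Real.cos φ| := by
          rw [lt_abs]; right
          nlinarith [mul_lt_mul_of_pos_left (show 1/a < Real.cos φ - Real.cos ψ by linarith) ha0, ha1]
        simp only [Dfun]
        rw [if_pos hgt]
      · exfalso
        have hz : β = π := by rw [hβdef, beth]; exact Real.arccos_eq_pi.2 hc.le
        rw [hz] at h1
        linarith
    rw [hcongr]
    have hderiv : ∀ ψ ∈ Set.uIcc β π, HasDerivAt (Afun φ)
        (Real.sin φ / (Real.cos ψ - Real.cos φ)) ψ := by
      intro ψ hψ
      rw [Set.uIcc_of_le hβπ] at hψ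
      obtain ⟨h1, h2⟩ := hψ
      have hψ0 : 0 ≤ ψ := le_trans hβ0 h1
      apply A_hasDeriv
      · linarith
      · linarith
      · apply ne_of_gt
        apply Real.sin_pos_of_pos_of_lt_pi
        · linarith
        · linarith
    exact intervalIntegral.integral_eq_sub_of_hasDerivAt hderiv
      (hAcont β π hβπ (fun ψ hψ => by
        have : Real.cos ψ ≤ Real.cos β :=
          Real.cos_le_cos_of_nonneg_of_le_pi hβ0 hψ.2 hψ.1
        exact ne_of_lt (by linarith)))
  have hA0 : Afun φ 0 = 0 := by
    simp only [Afun]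
    rw [show ((0:ℝ) + φ)/2 = φ/2 by ring, show ((0:ℝ) - φ)/2 = -(φ/2) by ring,
      Real.sin_neg, Real.log_neg_eq_log, sub_self]
  have hAπ : Afun φ π = 0 := by
    simp only [Afun]
    rw [show (π + φ)/2 = π - ((π - φ)/2) by ring, Real.sin_pi_sub, sub_self]
  rw [hP1, hP2, hP3, hA0, hAπ]
  ring

lemma Aαβ_nonpos {a φ : ℝ} (ha0 : 0 < a) (hφ : φ ∈ Set.Ioo 0 (π/2)) :
    Afun φ (alph a φ) - Afun φ (beth a φ) ≤ 0 := by
  obtain ⟨hφ0, hφ2⟩ := hφ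
  have hπ : 0 < π := Real.pi_pos
  have hφπ : φ < π := by linarith
  have ha' : 0 < 1/a := by positivity
  have ha1 : a * (1/a) = 1 := by field_simp
  set α := alph a φ with hαdef
  set β := beth a φ with hβdef
  have hα0 : 0 ≤ α := Real.arccos_nonneg _
  have hαπ : α ≤ π := Real.arccos_le_pi _
  have hβ0 : 0 ≤ β := Real.arccos_nonneg _
  have hβπ : β ≤ π := Real.arccos_le_pi _
  have hcosφα : Real.cos φ < Real.cos α := by
    rcases le_or_gt (Real.cos φ + 1/a) 1 with hc | hc
    · rw [hαdef, alph, Real.cos_arccos (by nlinarith [Real.neg_one_le_cos φ]) hc]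
      linarith
    · rw [hαdef, alph, Real.arccos_eq_zero.2 hc.le, Real.cos_zero]
      have := Real.strictAntiOn_cos (Set.left_mem_Icc.2 hπ.le) ⟨hφ0.le, hφπ.le⟩ hφ0
      rwa [Real.cos_zero] at this
  have hαφ : α < φ := lt_of_cos_lt ⟨hφ0.le, hφπ.le⟩ ⟨hα0, hαπ⟩ hcosφα
  have hcosβφ : Real.cos β < Real.cos φ := by
    rcases le_or_gt (-1) (Real.cos φ - 1/a) with hc | hc
    · rw [hβdef, beth, Real.cos_arccos hc (by nlinarith [Real.cos_le_one φ])]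
      linarith
    · rw [hβdef, beth, Real.arccos_eq_pi.2 hc.le, Real.cos_pi]
      have : 0 < Real.cos φ := Real.cos_pos_of_mem_Ioo ⟨by linarith, hφ2⟩
      linarith
  have hφβ : φ < β := lt_of_cos_lt ⟨hβ0, hβπ⟩ ⟨hφ0.le, hφπ.le⟩ hcosβφ
  have hs1 : 0 < Real.sin ((α + φ)/2) :=
    Real.sin_pos_of_pos_of_lt_pi (by linarith) (by linarith)
  have hs2 : 0 < Real.sin ((φ - α)/2) :=
    Real.sin_pos_of_pos_of_lt_pi (by linarith) (by linarith)
  have hs3 : 0 < Real.sin ((β + φ)/2) :=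
    Real.sin_pos_of_pos_of_lt_pi (by linarith) (by linarith)
  have hs4 : 0 < Real.sin ((β - φ)/2) :=
    Real.sin_pos_of_pos_of_lt_pi (by linarith) (by linarith)
  have key : Real.sin ((α + φ)/2) * Real.sin ((β - φ)/2)
      ≤ Real.sin ((φ - α)/2) * Real.sin ((β + φ)/2) := by
    rcases le_or_gt (Real.cos φ + 1/a) 1 with hc | hc
    · have hcφ0 : 0 ≤ Real.cos φ :=
        Real.cos_nonneg_of_mem_Icc ⟨by linarith, hφ2.le⟩
      have hcosα : Real.cos α = Real.cos φ + 1/a :=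
        Real.cos_arccos (by nlinarith [Real.neg_one_le_cos φ]) hc
      have hβc : (-1:ℝ) ≤ Real.cos φ - 1/a := by linarith
      have hcosβv : Real.cos β = Real.cos φ - 1/a :=
        Real.cos_arccos hβc (by nlinarith [Real.cos_le_one φ])
      have hsum : Real.cos α + Real.cos β = 2 * Real.cos φ := by
        rw [hcosα, hcosβv]; ring
      have hαβπ : α + β ≤ π := by
        by_contra hcon
        push_neg at hcon
        have h2 : Real.cos β < Real.cos (π - α) :=
          Real.strictAntiOn_cos ⟨by linarith, by linarith⟩ ⟨hβ0, hβπ⟩ (by linarith)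
        rw [Real.cos_pi_sub] at h2
        linarith
      have hS : 0 ≤ Real.cos ((α + β)/2) :=
        Real.cos_nonneg_of_mem_Icc ⟨by linarith, by linarith⟩
      have h14 := Real.cos_sub_cos ((α + β)/2) (φ - (β - α)/2)
      rw [show ((α + β)/2 + (φ - (β - α)/2))/2 = (α + φ)/2 by ring,
          show ((α + β)/2 - (φ - (β - α)/2))/2 = (β - φ)/2 by ring] at h14
      have h23 := Real.cos_sub_cos (φ + (β - α)/2) ((α + β)/2)
      rw [show ((φ + (β - α)/2) + (α + β)/2)/2 = (β + φ)/2 by ring,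
          show ((φ + (β - α)/2) - (α + β)/2)/2 = (φ - α)/2 by ring] at h23
      have hsumφ := Real.cos_add_cos (φ - (β - α)/2) (φ + (β - α)/2)
      rw [show ((φ - (β - α)/2) + (φ + (β - α)/2))/2 = φ by ring,
          show ((φ - (β - α)/2) - (φ + (β - α)/2))/2 = -((β - α)/2) by ring,
          Real.cos_neg] at hsumφ
      have hsum2 := Real.cos_add_cos α β
      rw [show (α - β)/2 = -((β - α)/2) by ring, Real.cos_neg] at hsum2
      have hcosφ : Real.cos φ = Real.cos ((α + β)/2) * Real.cos ((β - α)/2) := by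
        rw [hsum2] at hsum
        linarith
      have hkey2 : Real.cos φ * Real.cos ((β - α)/2)
          = Real.cos ((α + β)/2) * Real.cos ((β - α)/2)^2 := by
        rw [hcosφ]; ring
      have hM2 : Real.cos ((β - α)/2)^2 ≤ 1 := by
        nlinarith [Real.cos_le_one ((β - α)/2), Real.neg_one_le_cos ((β - α)/2)]
      nlinarith [h14, h23, hsumφ, hkey2, mul_nonneg hS (sub_nonneg.2 hM2)]
    · have hz : α = 0 := by rw [hαdef, alph]; exact Real.arccos_eq_zero.2 hc.le
      rw [hz]
      rw [show ((0:ℝ) + φ)/2 = φ/2 by ring, show (φ - (0:ℝ))/2 = φ/2 by ring]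
      have h34 := Real.sin_sub_sin ((β + φ)/2) ((β - φ)/2)
      rw [show ((β + φ)/2 - (β - φ)/2)/2 = φ/2 by ring,
          show ((β + φ)/2 + (β - φ)/2)/2 = β/2 by ring] at h34
      have hsφ2 : 0 ≤ Real.sin (φ/2) :=
        Real.sin_nonneg_of_nonneg_of_le_pi (by linarith) (by linarith)
      have hcβ2 : 0 ≤ Real.cos (β/2) :=
        Real.cos_nonneg_of_mem_Icc ⟨by linarith, by linarith⟩
      nlinarith [mul_nonneg hsφ2 hcβ2]
  have hlog : Real.log (Real.sin ((α + φ)/2) * Real.sin ((β - φ)/2))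
      ≤ Real.log (Real.sin ((φ - α)/2) * Real.sin ((β + φ)/2)) :=
    Real.log_le_log (by positivity) key
  rw [Real.log_mul (ne_of_gt hs1) (ne_of_gt hs4),
      Real.log_mul (ne_of_gt hs2) (ne_of_gt hs3)] at hlog
  have hAα : Afun φ α = Real.log (Real.sin ((α + φ)/2)) - Real.log (Real.sin ((φ - α)/2)) := by
    simp only [Afun]
    rw [show (α - φ)/2 = -((φ - α)/2) by ring, Real.sin_neg, Real.log_neg_eq_log]
  have hAβ : Afun φ β = Real.log (Real.sin ((β + φ)/2)) - Real.log (Real.sin ((β - φ)/2)) := rfl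
  rw [hAα, hAβ]
  linarith

lemma Fl_cont (a : ℝ) : Continuous (Fl a) := by
  have : LipschitzWith (Real.toNNReal π) (Fl a) := by
    apply LipschitzWith.of_dist_le_mul
    intro u v
    rw [Real.dist_eq, Real.dist_eq, Real.coe_toNNReal _ Real.pi_pos.le]
    exact Fl_lip a u v
  exact this.continuous

lemma G_antitone {a : ℝ} (ha0 : 0 < a) :
    AntitoneOn (fun φ => Fl a (a * Real.cos φ)) (Set.Icc 0 (π/2)) := by
  apply antitoneOn_of_deriv_nonpos (convex_Icc 0 (π/2))
  · exact ((Fl_cont a).comp (continuous_const.mul Real.continuous_cos)).continuousOn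
  · intro φ hφ
    rw [interior_Icc] at hφ
    exact (G_hasDeriv ha0 φ).differentiableAt.differentiableWithinAt
  · intro φ hφ
    rw [interior_Icc] at hφ
    rw [(G_hasDeriv ha0 φ).deriv, intD_eq ha0 hφ]
    exact Aαβ_nonpos ha0 hφ

lemma Fl_le {a : ℝ} (ha0 : 0 < a) {u : ℝ} (hu : u ∈ Set.Icc (-a) a) :
    Fl a u ≤ Fl a a := by
  have h1 : -1 ≤ u/a := by rw [le_div_iff₀ ha0]; linarith [hu.1]
  have h2 : u/a ≤ 1 := by rw [div_le_one ha0]; exact hu.2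
  have hcosu : a * Real.cos (Real.arccos (u/a)) = u := by
    rw [Real.cos_arccos h1 h2]; field_simp
  have hG0 : Fl a (a * Real.cos 0) = Fl a a := by rw [Real.cos_zero, mul_one]
  have hmem0 : (0:ℝ) ∈ Set.Icc (0:ℝ) (π/2) := Set.left_mem_Icc.2 (by positivity)
  rcases le_or_gt (Real.arccos (u/a)) (π/2) with hle | hgt
  · have h3 : Fl a (a * Real.cos (Real.arccos (u/a))) ≤ Fl a (a * Real.cos 0) :=
      G_antitone ha0 hmem0 ⟨Real.arccos_nonneg _, hle⟩ (Real.arccos_nonneg _)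
    rw [hcosu, hG0] at h3
    exact h3
  · have hπφ : π - Real.arccos (u/a) ∈ Set.Icc (0:ℝ) (π/2) :=
      ⟨by linarith [Real.arccos_le_pi (u/a)], by linarith⟩
    have h3 : Fl a (a * Real.cos (π - Real.arccos (u/a))) ≤ Fl a (a * Real.cos 0) :=
      G_antitone ha0 hmem0 hπφ hπφ.1
    rw [hG0] at h3
    have hcos2 : a * Real.cos (π - Real.arccos (u/a)) = -u := by
      rw [Real.cos_pi_sub, Real.cos_arccos h1 h2]
      field_simp
    rw [hcos2, Fl_neg] at h3
    exact h3

/-- For `a > 1/2`, the maximum of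
`f(u) = ∫_{[-a,a] \ (u-1,u+1)} log |t - u| / (π √(a² - t²)) dt` over `[-a, a]`
is attained at the endpoints and equals `∫_{1-a}^{a} log (t + a)/(π √(a² - t²)) dt`. -/
theorem max_of_f (a : ℝ) (ha : 1 / 2 < a) :
    IsMaxOn (fun u : ℝ => ∫ t in Set.Icc (-a) a \ Set.Ioo (u - 1) (u + 1),
        Real.log |t - u| / (π * Real.sqrt (a ^ 2 - t ^ 2))) (Set.Icc (-a) a) a ∧
    (∫ t in Set.Icc (-a) a \ Set.Ioo (a - 1) (a + 1),
        Real.log |t - a| / (π * Real.sqrt (a ^ 2 - t ^ 2))) =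
      (∫ t in Set.Icc (-a) a \ Set.Ioo (-a - 1) (-a + 1),
        Real.log |t - (-a)| / (π * Real.sqrt (a ^ 2 - t ^ 2))) ∧
    (∫ t in Set.Icc (-a) a \ Set.Ioo (a - 1) (a + 1),
        Real.log |t - a| / (π * Real.sqrt (a ^ 2 - t ^ 2))) =
      ∫ t in (1 - a)..a, Real.log (t + a) / (π * Real.sqrt (a ^ 2 - t ^ 2)) := by
  have ha0 : 0 < a := by linarith
  have hmema : a ∈ Set.Icc (-a) a := ⟨by linarith, le_refl a⟩
  have hmemna : -a ∈ Set.Icc (-a) a := ⟨le_refl _, by linarith⟩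
  have hfa := f_eq ha0 hmema
  have hfna := f_eq ha0 hmemna
  have hpart2 : (∫ t in Set.Icc (-a) a \ Set.Ioo (a - 1) (a + 1),
      Real.log |t - a| / (π * Real.sqrt (a ^ 2 - t ^ 2))) =
      (∫ t in Set.Icc (-a) a \ Set.Ioo (-a - 1) (-a + 1),
      Real.log |t - (-a)| / (π * Real.sqrt (a ^ 2 - t ^ 2))) := by
    rw [hfa, hfna, Fl_neg]
  refine ⟨?_, hpart2, ?_⟩
  · rw [isMaxOn_iff]
    intro x hx
    show (∫ t in Set.Icc (-a) a \ Set.Ioo (x - 1) (x + 1),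
        Real.log |t - x| / (π * Real.sqrt (a ^ 2 - t ^ 2)))
      ≤ ∫ t in Set.Icc (-a) a \ Set.Ioo (a - 1) (a + 1),
        Real.log |t - a| / (π * Real.sqrt (a ^ 2 - t ^ 2))
    rw [f_eq ha0 hx, hfa]
    exact mul_le_mul_of_nonneg_left (Fl_le ha0 hx) (by positivity)
  · rw [hpart2]
    have hset : Set.Icc (-a) a \ Set.Ioo (-a - 1) (-a + 1) = Set.Icc (1 - a) a := by
      ext t
      simp only [Set.mem_diff, Set.mem_Icc, Set.mem_Ioo, not_and, not_lt]
      constructor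
      · rintro ⟨⟨h1, h2⟩, h3⟩
        exact ⟨by linarith [h3 (by linarith)], h2⟩
      · rintro ⟨h1, h2⟩
        exact ⟨⟨by linarith, h2⟩, fun h4 => by linarith⟩
    rw [hset]
    have hcongr : (∫ t in Set.Icc (1 - a) a,
        Real.log |t - (-a)| / (π * Real.sqrt (a ^ 2 - t ^ 2)))
        = ∫ t in Set.Icc (1 - a) a, Real.log (t + a) / (π * Real.sqrt (a ^ 2 - t ^ 2)) := by
      apply setIntegral_congr_fun measurableSet_Icc
      intro t ht
      show Real.log |t - (-a)| / (π * Real.sqrt (a ^ 2 - t ^ 2))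
        = Real.log (t + a) / (π * Real.sqrt (a ^ 2 - t ^ 2))
      rw [show t - (-a) = t + a by ring, abs_of_pos (by linarith [ht.1])]
    rw [hcongr, integral_Icc_eq_integral_Ioc,
      ← intervalIntegral.integral_of_le (by linarith : 1 - a ≤ a)]
end

section
/- For r ∈ (0, 1/2], the best constant in the inequality ‖q‖_{D̄_r} ≤ C^n ‖p‖_{D̄_r} (over all monic p of degree n with monic factor q) is C = 1/r; in particular, for all such p, q: ‖q‖_{D̄_r} ≤ r^{-n} ‖p‖_{D̄_r}. -/
open Real Polynomial

private lemma biSup_le' {S : Set ℂ} {f : ℂ → ℝ} {a : ℝ} (ha : 0 ≤ a)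
    (h : ∀ z ∈ S, f z ≤ a) : (⨆ z ∈ S, f z) ≤ a :=
  Real.iSup_le (fun z => Real.iSup_le (fun hz => h z hz) ha) ha

private lemma le_biSup' {S : Set ℂ} {f : ℂ → ℝ} {a : ℝ}
    (h : ∀ z ∈ S, f z ≤ a) {z₀ : ℂ} (hz : z₀ ∈ S) : f z₀ ≤ ⨆ z ∈ S, f z := by
  have hbdd : BddAbove (Set.range fun z => ⨆ _ : z ∈ S, f z) := by
    refine ⟨max a 0, ?_⟩
    rintro x ⟨z, rfl⟩
    by_cases hzS : z ∈ S
    · show (⨆ _ : z ∈ S, f z) ≤ max a 0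
      rw [ciSup_pos (f := fun _ => f z) hzS]; exact le_max_of_le_left (h z hzS)
    · have : IsEmpty (z ∈ S) := ⟨hzS⟩
      show (⨆ _ : z ∈ S, f z) ≤ max a 0
      rw [Real.iSup_of_isEmpty]; exact le_max_right _ _
  calc f z₀ = ⨆ _ : z₀ ∈ S, f z₀ := (ciSup_pos (f := fun _ => f z₀) hz).symm
    _ ≤ ⨆ z ∈ S, f z := le_ciSup hbdd z₀


private lemma multiset_prod_map_le (t : Multiset ℂ) (f g : ℂ → ℝ)
    (h0 : ∀ a, 0 ≤ f a) (h : ∀ a, f a ≤ g a) :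
    (t.map f).prod ≤ (t.map g).prod := by
  induction t using Multiset.induction_on with
  | empty => simp
  | cons a s ih =>
    simp only [Multiset.map_cons, Multiset.prod_cons]
    have hf : (0:ℝ) ≤ (s.map f).prod :=
      Multiset.prod_nonneg (by intro x hx; obtain ⟨b, _, rfl⟩ := Multiset.mem_map.mp hx; exact h0 b)
    exact mul_le_mul (h a) ih hf ((h0 a).trans (h a))

private lemma diffble_msprod (t : Multiset ℂ) (g : ℂ → ℂ → ℂ)
    (hg : ∀ a, Differentiable ℂ (g a)) :
    Differentiable ℂ (fun z => (t.map (fun a => g a z)).prod) := by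
  induction t using Multiset.induction_on with
  | empty => simpa using (differentiable_const (1:ℂ))
  | cons a s ih => simp only [Multiset.map_cons, Multiset.prod_cons]; exact (hg a).mul ih

private lemma abs_msprod (t : Multiset ℂ) (f : ℂ → ℂ) :
    ‖(t.map f).prod‖ = (t.map fun a => ‖f a‖).prod := by
  refine (map_multiset_prod (normHom (α := ℂ)) _).trans ?_
  simp [Multiset.map_map, Function.comp]

/-- Core: `∏ max(r,|a|)` over the roots is at most the sup norm on the disk. -/
private lemma prod_max_le_biSup {r : ℝ} (hr : 0 < r) (p : Polynomial ℂ) (hp : p.Monic) :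
    ((p.roots).map (fun a => max r (‖a‖))).prod ≤
      ⨆ z ∈ Metric.closedBall (0:ℂ) r, ‖p.eval z‖ := by
  -- a uniform bound for |p| on the closed ball
  obtain ⟨B, hB⟩ : ∃ B, ∀ z ∈ Metric.closedBall (0:ℂ) r, ‖p.eval z‖ ≤ B := by
    obtain ⟨B, hB⟩ := (isCompact_closedBall (0:ℂ) r).exists_bound_of_continuousOn
      (Continuous.continuousOn (by continuity : Continuous fun z => p.eval z))
    exact ⟨B, fun z hz => by simpa using hB z hz⟩
  set M : ℝ := ⨆ z ∈ Metric.closedBall (0:ℂ) r, ‖p.eval z‖ with hM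
  have hle : ∀ z ∈ Metric.closedBall (0:ℂ) r, ‖p.eval z‖ ≤ M :=
    fun z hz => le_biSup' hB hz
  set t := p.roots with ht
  have hsplit : p = (t.map fun a => X - C a).prod :=
    (IsAlgClosed.splits p).eq_prod_roots_of_monic hp
  -- the auxiliary Blaschke-type function
  set g : ℂ → ℂ → ℂ := fun a z =>
    if ‖a‖ ≤ r then (r^2 : ℂ) - (starRingEnd ℂ) a * z else z - a with hg
  set c : ℂ → ℝ := fun a => if ‖a‖ ≤ r then r else 1 with hc
  set F : ℂ → ℂ := fun z => (t.map (fun a => g a z)).prod with hF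
  have hcpos : ∀ a, 0 < c a := fun a => by by_cases h : ‖a‖ ≤ r <;> simp [hc, h, hr]
  have hRpos : 0 < (t.map c).prod := Multiset.prod_pos (by
    intro x hx; obtain ⟨b, _, rfl⟩ := Multiset.mem_map.mp hx; exact hcpos b)
  -- evaluation on the sphere
  have hsphere : ∀ z ∈ Metric.sphere (0:ℂ) r,
      ‖F z‖ = (t.map c).prod * ‖p.eval z‖ := by
    intro z hz
    have hzabs : ‖z‖ = r := by
      simpa [Complex.dist_eq] using (Metric.mem_sphere.mp hz)
    have key : ∀ a, ‖g a z‖ = c a * ‖z - a‖ := by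
      intro a
      by_cases h : ‖a‖ ≤ r
      · have hr2 : (r^2 : ℂ) = z * (starRingEnd ℂ) z := by
          rw [Complex.mul_conj, Complex.normSq_eq_norm_sq, hzabs]
          push_cast; ring
        simp only [hg, hc, if_pos h]
        rw [hr2]
        have : z * (starRingEnd ℂ) z - (starRingEnd ℂ) a * z
            = z * (starRingEnd ℂ) (z - a) := by ring_nf; rw [map_sub]; ring
        rw [this, norm_mul, hzabs, Complex.norm_conj]
      · simp [hg, hc, if_neg h]
    rw [hF, abs_msprod]
    have : (t.map fun a => ‖g a z‖).prod
        = (t.map fun a => c a * ‖z - a‖).prod := by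
      exact congrArg Multiset.prod (Multiset.map_congr rfl fun a _ => key a)
    rw [this, Multiset.prod_map_mul]
    congr 1
    have hev : p.eval z = (t.map fun a => z - a).prod := by
      conv_lhs => rw [hsplit]
      rw [eval_multiset_prod, Multiset.map_map]
      simp [Function.comp]
    rw [hev, abs_msprod]
  -- evaluation at the center
  have hF0 : ‖F 0‖ = (t.map c).prod * (t.map fun a => max r (‖a‖)).prod := by
    have key : ∀ a, ‖g a 0‖ = c a * max r (‖a‖) := by
      intro a
      by_cases h : ‖a‖ ≤ r
      · simp only [hg, hc, if_pos h, mul_zero, sub_zero]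
        have h2 : ((r:ℂ))^2 = ((r^2 : ℝ) : ℂ) := by push_cast; ring
        rw [h2, Complex.norm_real, Real.norm_eq_abs, abs_of_nonneg (by positivity), max_eq_left h, sq]
      · simp only [hg, hc, if_neg h, zero_sub, norm_neg,
          max_eq_right (le_of_not_ge h), one_mul]
    rw [hF, abs_msprod,
      congrArg Multiset.prod (Multiset.map_congr rfl fun a _ => key a),
      Multiset.prod_map_mul]
  -- maximum modulus principle
  have hmax : ‖F 0‖ ≤ (t.map c).prod * M := by
    have hdiff : Differentiable ℂ F := diffble_msprod t g (fun a => by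
      by_cases h : ‖a‖ ≤ r
      · simp only [hg, if_pos h]; fun_prop
      · simp only [hg, if_neg h]; fun_prop)
    refine Complex.norm_le_of_forall_mem_frontier_norm_le (U := Metric.ball (0:ℂ) r) (Metric.isBounded_ball)
      hdiff.diffContOnCl ?_ ?_
    · intro z hz
      rw [frontier_ball _ hr.ne'] at hz
      rw [hsphere z hz]
      exact mul_le_mul_of_nonneg_left (hle z (Metric.sphere_subset_closedBall hz)) hRpos.le
    · rw [closure_ball _ hr.ne']
      exact Metric.mem_closedBall_self hr.le
  rw [hF0] at hmax
  exact le_of_mul_le_mul_left hmax hRpos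

private lemma multiset_one_le_prod (t : Multiset ℂ) (f : ℂ → ℝ) (h : ∀ a, 1 ≤ f a) :
    1 ≤ (t.map f).prod := by
  induction t using Multiset.induction_on with
  | empty => simp
  | cons a s ih =>
    simp only [Multiset.map_cons, Multiset.prod_cons]
    nlinarith [h a]

/-- For `0 < r ≤ 1/2`: every monic factor `q` of a monic polynomial `p` of degree `n`
satisfies `‖q‖_{D̄_r} ≤ (1/r)^n ‖p‖_{D̄_r}`, and this constant is attained, so `1/r`
is the best constant. -/
theorem disk_small_radius_best_constant (r : ℝ) (hr : r ∈ Set.Ioc (0:ℝ) (1 / 2)) :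
    (∀ p q : Polynomial ℂ, p.Monic → q.Monic → q ∣ p →
      (⨆ z ∈ Metric.closedBall (0:ℂ) r, ‖q.eval z‖) ≤
        (1 / r) ^ p.natDegree *
          ⨆ z ∈ Metric.closedBall (0:ℂ) r, ‖p.eval z‖) ∧
    (∀ n : ℕ, ∃ p q : Polynomial ℂ, p.Monic ∧ q.Monic ∧ q ∣ p ∧ p.natDegree = n ∧
      (⨆ z ∈ Metric.closedBall (0:ℂ) r, ‖q.eval z‖) =
        (1 / r) ^ n *
          ⨆ z ∈ Metric.closedBall (0:ℂ) r, ‖p.eval z‖) := by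
  obtain ⟨hr0, hr2⟩ := hr
  constructor
  · intro p q hp hq hdvd
    have hMge : ((p.roots).map (fun a => max r (‖a‖))).prod ≤
        ⨆ z ∈ Metric.closedBall (0:ℂ) r, ‖p.eval z‖ :=
      prod_max_le_biSup hr0 p hp
    have hpt : ∀ a : ℂ, r + ‖a‖ ≤ (1/r) * max r (‖a‖) := by
      intro a
      by_cases h : ‖a‖ ≤ r
      · rw [max_eq_left h, one_div, inv_mul_cancel₀ hr0.ne']
        linarith
      · push_neg at h
        rw [max_eq_right h.le]
        have h2 : (2:ℝ) ≤ 1/r := by rw [le_div_iff₀ hr0]; linarith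
        nlinarith
    have hle : q.roots ≤ p.roots := roots.le_of_dvd hp.ne_zero hdvd
    have hq1 : (⨆ z ∈ Metric.closedBall (0:ℂ) r, ‖q.eval z‖)
        ≤ ((q.roots).map fun a => r + ‖a‖).prod := by
      have hnn : (0:ℝ) ≤ ((q.roots).map fun a => r + ‖a‖).prod :=
        Multiset.prod_nonneg (fun x hx => by
          obtain ⟨b, _, rfl⟩ := Multiset.mem_map.mp hx; positivity)
      refine biSup_le' hnn ?_
      intro z hz
      have hzr : ‖z‖ ≤ r := by simpa [Complex.dist_eq] using hz
      have hsplit : q = ((q.roots).map fun a => X - C a).prod :=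
        (IsAlgClosed.splits q).eq_prod_roots_of_monic hq
      have hev : q.eval z = ((q.roots).map fun a => z - a).prod := by
        conv_lhs => rw [hsplit]
        rw [eval_multiset_prod, Multiset.map_map]
        simp [Function.comp]
      rw [hev, abs_msprod]
      refine multiset_prod_map_le _ _ _ (fun a => norm_nonneg _) ?_
      intro a
      calc ‖z - a‖ ≤ ‖z‖ + ‖a‖ := by
            simpa [sub_eq_add_neg] using norm_add_le z (-a)
        _ ≤ r + ‖a‖ := by linarith
    have h2 : ((q.roots).map fun a => r + ‖a‖).prod
        ≤ ((q.roots).map fun a => (1/r) * max r (‖a‖)).prod :=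
      multiset_prod_map_le _ _ _ (fun a => by positivity) hpt
    have h3 : ((q.roots).map fun a => (1/r) * max r (‖a‖)).prod
        ≤ ((p.roots).map fun a => (1/r) * max r (‖a‖)).prod := by
      have hsum : q.roots + (p.roots - q.roots) = p.roots := add_tsub_cancel_of_le hle
      rw [← hsum, Multiset.map_add, Multiset.prod_add]
      have hA : 0 ≤ ((q.roots).map fun a => (1/r) * max r (‖a‖)).prod :=
        Multiset.prod_nonneg (fun x hx => by
          obtain ⟨b, _, rfl⟩ := Multiset.mem_map.mp hx; positivity)
      have hB : 1 ≤ (((p.roots - q.roots)).map fun a => (1/r) * max r (‖a‖)).prod := by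
        refine multiset_one_le_prod _ _ ?_
        intro a
        calc (1:ℝ) = (1/r) * r := by field_simp
          _ ≤ (1/r) * max r (‖a‖) :=
            mul_le_mul_of_nonneg_left (le_max_left _ _) (by positivity)
      exact le_mul_of_one_le_right hA hB
    have h4 : ((p.roots).map fun a => (1/r) * max r (‖a‖)).prod
        = (1/r)^p.natDegree * ((p.roots).map fun a => max r (‖a‖)).prod := by
      rw [Multiset.prod_map_mul]
      congr 1
      rw [Multiset.map_const', Multiset.prod_replicate]
      congr 1
      exact splits_iff_card_roots.mp (IsAlgClosed.splits p)
    calc (⨆ z ∈ Metric.closedBall (0:ℂ) r, ‖q.eval z‖)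
        ≤ ((q.roots).map fun a => r + ‖a‖).prod := hq1
      _ ≤ ((q.roots).map fun a => (1/r) * max r (‖a‖)).prod := h2
      _ ≤ ((p.roots).map fun a => (1/r) * max r (‖a‖)).prod := h3
      _ = (1/r)^p.natDegree * ((p.roots).map fun a => max r (‖a‖)).prod := h4
      _ ≤ (1/r)^p.natDegree * ⨆ z ∈ Metric.closedBall (0:ℂ) r, ‖p.eval z‖ :=
          mul_le_mul_of_nonneg_left hMge (by positivity)
  · intro n
    refine ⟨X^n, 1, monic_X_pow n, monic_one, one_dvd _, natDegree_X_pow n, ?_⟩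
    have e1 : (⨆ z ∈ Metric.closedBall (0:ℂ) r, ‖(1:Polynomial ℂ).eval z‖) = 1 := by
      apply le_antisymm
      · exact biSup_le' zero_le_one (fun z hz => by simp)
      · have := le_biSup' (S := Metric.closedBall (0:ℂ) r)
          (f := fun z => ‖(1:Polynomial ℂ).eval z‖) (a := 1)
          (fun z hz => by simp) (Metric.mem_closedBall_self hr0.le)
        simpa using this
    have e2 : (⨆ z ∈ Metric.closedBall (0:ℂ) r,
        ‖(X^n : Polynomial ℂ).eval z‖) = r^n := by
      have hbd : ∀ z ∈ Metric.closedBall (0:ℂ) r,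
          ‖(X^n : Polynomial ℂ).eval z‖ ≤ r^n := by
        intro z hz
        have hzr : ‖z‖ ≤ r := by simpa [Complex.dist_eq] using hz
        simp only [eval_pow, eval_X, norm_pow]
        exact pow_le_pow_left₀ (norm_nonneg _) hzr n
      apply le_antisymm
      · exact biSup_le' (by positivity) hbd
      · have hmem : (r:ℂ) ∈ Metric.closedBall (0:ℂ) r := by
          simp [Complex.dist_eq, abs_of_nonneg hr0.le]
        have := le_biSup' (f := fun z => ‖(X^n : Polynomial ℂ).eval z‖) hbd hmem
        simpa [Complex.norm_real, abs_of_nonneg hr0.le] using this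
    rw [e1, e2, one_div, inv_pow, inv_mul_cancel₀ (pow_ne_zero n hr0.ne')]
end

section
/- For a ∈ (0, 1/2], every monic polynomial p of degree n with ‖p‖_{[-a,a]} denoting the sup norm on [-a,a], and every monic factor q of p: ‖q‖_{[-a,a]} ≤ (2/a)^n ‖p‖_{[-a,a]}. -/
open Real Polynomial

lemma exists_joukowski (a : ℝ) (ha : 0 < a) (z : ℂ) :
    ∃ w : ℂ, 1 ≤ ‖w‖ ∧ ((a : ℂ)/2) * (w + w⁻¹) = z := by
  have ha' : (a : ℂ) ≠ 0 := by exact_mod_cast ha.ne'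
  obtain ⟨s, hs⟩ : ∃ s : ℂ, s ^ 2 = (2*z/a)^2 - 4 :=
    IsAlgClosed.exists_pow_nat_eq _ two_pos
  set c : ℂ := 2*z/a with hc
  have hmul : ((c+s)/2) * ((c-s)/2) = 1 := by
    have h4 : c^2 - s^2 = 4 := by rw [hs]; ring
    field_simp
    linear_combination h4
  have hz : ((a : ℂ)/2) * c = z := by rw [hc]; field_simp
  rcases le_or_gt 1 ‖(c+s)/2‖ with h | h
  · refine ⟨(c+s)/2, h, ?_⟩
    rw [inv_eq_of_mul_eq_one_right hmul, show (c+s)/2 + (c-s)/2 = c by ring, hz]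
  · have hn2 : 1 ≤ ‖(c-s)/2‖ := by
      have := congrArg norm hmul
      rw [norm_mul, norm_one] at this
      nlinarith [norm_nonneg ((c-s)/2)]
    refine ⟨(c-s)/2, hn2, ?_⟩
    rw [inv_eq_of_mul_eq_one_right (show (c-s)/2 * ((c+s)/2) = 1 by linear_combination hmul),
      show (c-s)/2 + (c+s)/2 = c by ring, hz]

lemma joukowski_dist_bound (a x : ℝ) (ha : 0 < a) (ha2 : a ≤ 1/2) (hx : |x| ≤ a)
    (w : ℂ) (hw : 1 ≤ ‖w‖) :
    ‖(x : ℂ) - ((a : ℂ)/2) * (w + w⁻¹)‖ ≤ ‖w‖ := by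
  have hwinv : ‖w⁻¹‖ ≤ 1 := by
    rw [norm_inv]; exact inv_le_one_of_one_le₀ hw
  have hca : ‖((a : ℂ)/2)‖ = a/2 := by
    rw [show ((a : ℂ)/2) = (((a/2 : ℝ)) : ℂ) by push_cast; ring, Complex.norm_real,
      Real.norm_eq_abs, abs_of_pos (by linarith)]
  calc ‖(x : ℂ) - ((a : ℂ)/2) * (w + w⁻¹)‖
      ≤ ‖(x : ℂ)‖ + ‖((a : ℂ)/2) * (w + w⁻¹)‖ := norm_sub_le _ _
    _ ≤ a + (a/2) * (‖w‖ + ‖w⁻¹‖) := by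
        rw [norm_mul, hca]
        gcongr
        · rw [Complex.norm_real, Real.norm_eq_abs]; exact hx
        · exact norm_add_le _ _
    _ ≤ ‖w‖ := by nlinarith

lemma circle_norm_eq (a : ℝ) (ha : 0 ≤ a) (u w : ℂ) (hu : ‖u‖ = 1) (hw : w ≠ 0) :
    ‖((a * u.re : ℝ) : ℂ) - ((a : ℂ)/2) * (w + w⁻¹)‖ * ‖w‖
      = (a/2) * (‖u - w‖ * ‖u * w - 1‖) := by
  have hu0 : u ≠ 0 := by intro h; rw [h, norm_zero] at hu; norm_num at hu
  have huinv : u⁻¹ = starRingEnd ℂ u := by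
    rw [Complex.inv_def, Complex.normSq_eq_norm_sq, hu]
    simp
  have hxu : ((a * u.re : ℝ) : ℂ) = ((a : ℂ)/2) * (u + u⁻¹) := by
    rw [huinv, Complex.add_conj]
    push_cast; ring
  have key : (((a : ℂ)/2) * (u + u⁻¹) - ((a : ℂ)/2) * (w + w⁻¹)) * (u * w)
      = ((a : ℂ)/2) * ((u - w) * (u * w - 1)) := by
    field_simp
    ring
  have hca : ‖((a : ℂ)/2)‖ = a/2 := by
    rw [show ((a : ℂ)/2) = (((a/2 : ℝ)) : ℂ) by push_cast; ring, Complex.norm_real,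
      Real.norm_eq_abs, abs_of_nonneg (by linarith)]
  have := congrArg norm key
  rw [norm_mul, norm_mul, norm_mul, hu, one_mul, norm_mul, hca] at this
  rw [hxu, this]

lemma conj_trick (u w : ℂ) (hu : ‖u‖ = 1) :
    ‖u - starRingEnd ℂ w‖ = ‖u * w - 1‖ := by
  have h1 : u * starRingEnd ℂ u = 1 := by
    rw [Complex.mul_conj, Complex.normSq_eq_norm_sq, hu]
    norm_num
  calc ‖u - starRingEnd ℂ w‖ = ‖starRingEnd ℂ (u - starRingEnd ℂ w)‖ := (RCLike.norm_conj _).symm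
    _ = ‖u * (starRingEnd ℂ u - w)‖ := by
        rw [norm_mul, hu, one_mul, map_sub, RingHomInvPair.comp_apply_eq₂]
    _ = ‖u * starRingEnd ℂ u - u * w‖ := by ring_nf
    _ = ‖u * w - 1‖ := by rw [h1, norm_sub_rev]

lemma exists_max_on_circle (G : Polynomial ℂ) :
    ∃ u : ℂ, ‖u‖ = 1 ∧ ‖G.eval 0‖ ≤ ‖G.eval u‖ := by
  obtain ⟨u, hu, hmax⟩ := (isCompact_sphere (0:ℂ) 1).exists_isMaxOn
    (NormedSpace.sphere_nonempty.2 zero_le_one)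
    ((G.continuous).norm.continuousOn)
  refine ⟨u, mem_sphere_zero_iff_norm.mp hu, ?_⟩
  have h0 : ‖G.eval 0‖ ≤ ‖G.eval u‖ := by
    have := Complex.norm_le_of_forall_mem_frontier_norm_le (U := Metric.ball (0:ℂ) 1) (C := ‖G.eval u‖)
      Metric.isBounded_ball (G.differentiable.diffContOnCl)
      (fun z hz => ?_) (subset_closure (Metric.mem_ball_self one_pos))
    · exact this
    · rw [frontier_ball (0:ℂ) one_ne_zero] at hz
      exact hmax hz
  exact h0

lemma norm_multiset_prod' (s : Multiset ℂ) : ‖s.prod‖ = (s.map (fun z => ‖z‖)).prod := by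
  induction s using Multiset.induction with
  | empty => simp
  | cons a s ih => simp [norm_mul, ih]

lemma prod_map_congr {α : Type*} {s : Multiset α} {f g : α → ℝ} (h : ∀ z ∈ s, f z = g z) :
    (s.map f).prod = (s.map g).prod := congrArg _ (Multiset.map_congr rfl h)

/-- For `0 < a ≤ 1/2`, every monic polynomial `p` of degree `n` and every monic factor
`q` of `p` satisfy `‖q‖_{[-a,a]} ≤ (2/a)^n ‖p‖_{[-a,a]}`. -/
theorem segment_small_factor_inequality (a : ℝ) (ha : a ∈ Set.Ioc (0:ℝ) (1 / 2))
    (p q : Polynomial ℂ) (hp : p.Monic) (hq : q.Monic) (hdvd : q ∣ p) :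
    (⨆ x ∈ Set.Icc (-a) a, ‖q.eval (x : ℂ)‖) ≤
      (2 / a) ^ p.natDegree * ⨆ x ∈ Set.Icc (-a) a, ‖p.eval (x : ℂ)‖ := by
  obtain ⟨ha0, ha2⟩ := ha
  set n := p.natDegree with hn
  have hp0 : p ≠ 0 := hp.ne_zero
  choose wf hwf1 hwfz using fun z => exists_joukowski a ha0 z
  have hwf0 : ∀ z, wf z ≠ 0 := by
    intro z h
    have := hwf1 z
    rw [h, norm_zero] at this
    norm_num at this
  have hsp : p.Splits := IsAlgClosed.splits p
  have hsq : q.Splits := IsAlgClosed.splits q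
  have hqle : q.roots ≤ p.roots := Polynomial.roots.le_of_dvd hp0 hdvd
  have hcard : p.roots.card = n := (Polynomial.splits_iff_card_roots.mp hsp)
  set W : ℝ := (p.roots.map fun z => ‖wf z‖).prod with hW
  have hW1 : 1 ≤ W := by
    refine Multiset.one_le_prod ?_
    intro r hr
    obtain ⟨z, _, rfl⟩ := Multiset.mem_map.mp hr
    exact hwf1 z
  have hWpos : 0 < W := lt_of_lt_of_le one_pos hW1
  -- eval formulas
  have hev : ∀ (r : Polynomial ℂ), r.Monic → ∀ x : ℂ,
      ‖r.eval x‖ = (r.roots.map fun z => ‖x - z‖).prod := by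
    intro r hr x
    conv_lhs => rw [(IsAlgClosed.splits r).eq_prod_roots_of_monic hr]
    rw [eval_multiset_prod, norm_multiset_prod' _, Multiset.map_map, Multiset.map_map]
    refine prod_map_congr fun z _ => ?_
    simp
  -- Step A : upper bound for q on the segment
  have hA : ∀ x : ℝ, x ∈ Set.Icc (-a) a → ‖q.eval (x:ℂ)‖ ≤ W := by
    intro x hx
    have hxa : |x| ≤ a := abs_le.mpr ⟨hx.1, hx.2⟩
    rw [hev q hq]
    have h1 : ((q.roots.map fun z => ‖(x:ℂ) - z‖)).prod
        ≤ ((q.roots.map fun z => ‖wf z‖)).prod := by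
      apply Multiset.prod_map_le_prod_map₀
      · intro z _; positivity
      · intro z _
        conv_lhs => rw [← hwfz z]
        exact joukowski_dist_bound a x ha0 ha2 hxa (wf z) (hwf1 z)
    refine h1.trans ?_
    have ht : p.roots = q.roots + (p.roots - q.roots) := by
      rw [add_comm, tsub_add_cancel_of_le hqle]
    rw [hW, ht, Multiset.map_add, Multiset.prod_add]
    refine le_mul_of_one_le_right ?_ ?_
    · refine Multiset.prod_nonneg ?_
      intro r hr
      obtain ⟨z, _, rfl⟩ := Multiset.mem_map.mp hr
      positivity
    · refine Multiset.one_le_prod ?_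
      intro r hr
      obtain ⟨z, _, rfl⟩ := Multiset.mem_map.mp hr
      exact hwf1 z
  -- Step B : lower bound for p
  set H := ((p.roots.map fun z => X - C (wf z))).prod with hH
  set K := ((p.roots.map fun z => X - C (starRingEnd ℂ (wf z)))).prod with hK
  obtain ⟨u, hu1, hmax⟩ := exists_max_on_circle (H * K)
  have hprodn : ∀ (f : ℂ → ℂ) (x : ℂ),
      ‖((p.roots.map fun z => X - C (f z))).prod.eval x‖
        = (p.roots.map fun z => ‖x - f z‖).prod := by
    intro f x
    rw [eval_multiset_prod, norm_multiset_prod' _, Multiset.map_map, Multiset.map_map]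
    refine prod_map_congr fun z _ => ?_
    simp
  have hG0 : ‖(H * K).eval 0‖ = W * W := by
    rw [eval_mul, norm_mul, hH, hK, hprodn, hprodn, hW]
    congr 1
    · refine prod_map_congr fun z _ => ?_; simp
    · refine prod_map_congr fun z _ => ?_; simp
  have hGu : ‖(H * K).eval u‖ = ((p.roots.map fun z => ‖u - wf z‖)).prod
      * ((p.roots.map fun z => ‖u * wf z - 1‖)).prod := by
    rw [eval_mul, norm_mul, hH, hK, hprodn, hprodn]
    congr 1
    exact prod_map_congr fun z _ => conj_trick u (wf z) hu1
  set x0 : ℝ := a * u.re with hx0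
  have hx0mem : x0 ∈ Set.Icc (-a) a := by
    rw [Set.mem_Icc, ← abs_le, hx0, abs_mul, abs_of_pos ha0]
    calc a * |u.re| ≤ a * 1 := by
          have : |u.re| ≤ 1 := by
            have := Complex.abs_re_le_norm u
            rw [hu1] at this
            exact this
          nlinarith
      _ = a := mul_one a
  have hpev : ‖p.eval (x0:ℂ)‖ * W = (a/2)^n * ‖(H * K).eval u‖ := by
    rw [hev p hp, hW, ← Multiset.prod_map_mul]
    have hthis : (p.roots.map fun z => ‖(x0:ℂ) - z‖ * ‖wf z‖).prod
        = (p.roots.map fun z => (a/2) * (‖u - wf z‖ * ‖u * wf z - 1‖)).prod := by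
      refine prod_map_congr fun z _ => ?_
      have h := circle_norm_eq a ha0.le u (wf z) hu1 (hwf0 z)
      rw [hwfz z] at h
      rw [hx0]
      exact h
    have hconst : ((p.roots.map fun _ => (a/2 : ℝ))).prod = (a/2)^n := by
      rw [Multiset.map_const', Multiset.prod_replicate, hcard]
    rw [hthis, Multiset.prod_map_mul, Multiset.prod_map_mul, hGu, hconst]
  have hlow : (a/2)^n * W ≤ ‖p.eval (x0:ℂ)‖ := by
    have h2 : (a/2)^n * (W * W) ≤ (a/2)^n * ‖(H * K).eval u‖ := by
      rw [← hG0]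
      have hpow : (0:ℝ) ≤ (a/2)^n := by positivity
      exact mul_le_mul_of_nonneg_left hmax hpow
    rw [← hpev] at h2
    have h3 : ((a/2)^n * W) * W ≤ ‖p.eval (x0:ℂ)‖ * W := by nlinarith
    exact le_of_mul_le_mul_right h3 hWpos
  -- sup juggling
  obtain ⟨Cb, hCb⟩ : ∃ Cb, ∀ x ∈ Set.Icc (-a) a, ‖p.eval ((x:ℝ):ℂ)‖ ≤ Cb := by
    obtain ⟨Cb, hCb⟩ := isCompact_Icc.exists_bound_of_continuousOn
      (f := fun x : ℝ => p.eval ((x:ℝ):ℂ)) (((p.continuous).comp Complex.continuous_ofReal).continuousOn)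
    exact ⟨Cb, hCb⟩
  set g : ℝ → ℝ := fun x => ⨆ _ : x ∈ Set.Icc (-a) a, ‖p.eval ((x:ℝ):ℂ)‖ with hg
  have hbdd : BddAbove (Set.range g) := by
    refine ⟨max Cb 0, ?_⟩
    rintro y ⟨x, rfl⟩
    exact Real.iSup_le (fun hx => le_max_of_le_left (hCb x hx)) (le_max_right _ _)
  have hBp : ‖p.eval ((x0:ℝ):ℂ)‖ ≤ ⨆ x ∈ Set.Icc (-a) a, ‖p.eval ((x:ℝ):ℂ)‖ := by
    have h4 : g x0 ≤ ⨆ x, g x := le_ciSup hbdd x0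
    simp only [hg] at h4
    rwa [ciSup_pos hx0mem] at h4
  have hBnn : 0 ≤ (2/a)^n * ⨆ x ∈ Set.Icc (-a) a, ‖p.eval ((x:ℝ):ℂ)‖ := by
    have := (norm_nonneg (p.eval ((x0:ℝ):ℂ))).trans hBp
    positivity
  refine Real.iSup_le (fun x => Real.iSup_le (fun hx => ?_) hBnn) hBnn
  have hone : (2/a)^n * ((a/2)^n * W) = W := by
    rw [← mul_assoc, ← mul_pow]
    have : (2/a) * (a/2) = 1 := by field_simp
    rw [this, one_pow, one_mul]
  calc ‖q.eval ((x:ℝ):ℂ)‖ ≤ W := hA x hx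
    _ = (2/a)^n * ((a/2)^n * W) := hone.symm
    _ ≤ (2/a)^n * ⨆ x ∈ Set.Icc (-a) a, ‖p.eval ((x:ℝ):ℂ)‖ := by
        have hpow : (0:ℝ) ≤ (2/a)^n := by positivity
        exact mul_le_mul_of_nonneg_left (hlow.trans hBp) hpow
end
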